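/- Let F ⊕ A =_ae 𝕋^d be a measurable tiling of the d-torus by a finite set F ⊂ ℝ^d with 0 ∈ F and a measurable set A ⊂ 𝕋^d. Then there exists a natural number q such that, up to sets of measure zero, ⋃_{f ∈ F ∩ ℚ^d} (f + A) = ⋂_{f ∈ F \ ℚ^d} A_f, where for each f ∈ F \ ℚ^d, A_f is a measurable subset of 𝕋^d which is invariant under translation by qf and satisfies 0 < μ(A_f) < 1. -/

import Mathlib

open MeasureTheory

/-- The `d`-torus `𝕋^d = ℝ^d/ℤ^d`. -/
abbrev Torus (d : ℕ) := Fin d → AddCircle (1 : ℝ)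

/-- The projection `ℝ^d → 𝕋^d`. -/
noncomputable def toTorus {d : ℕ} (v : Fin d → ℝ) : Torus d := fun i => (v i : AddCircle (1 : ℝ))

/-- A vector of `ℝ^d` is rational if all its coordinates are rational. -/
def IsRationalVec {d : ℕ} (f : Fin d → ℝ) : Prop := ∀ j, ∃ r : ℚ, f j = (r : ℝ)

/-!
Dilation: if `F ⊕ A` tiles, so does `rF ⊕ A` for every `r > 0` coprime to `|F|!`. For a prime
`p > |F|`, put `Φ = ∑_{f ∈ F} δ_f` in the group ring `𝔽_p[𝕋^d]`. The tiling says `Φ ∗ 1_A = 1`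
a.e., hence `Φ^p ∗ 1_A = |F|^(p-1) = 1` a.e.; by Frobenius `Φ^p = ∑_f δ_{pf}`, so the number of
tiles of `pF ⊕ A` through a.e. point is `≡ 1 (mod p)`, and it is `≤ |F| < p`, hence `1`.

Take `q > 0` divisible by `|F|!` with `qf ≡ 0` for all rational `f ∈ F`. Then every
`(1 + kq)F ⊕ A` is a tiling, in which rational `f` stay put and the others move by `k·qf`.
Let `U` be the union of the rational tiles and `A_f` the set of points whose orbit under
translation by `qf` visits `U` infinitely often. Then `A_f` is `qf`-invariant and contains `U`
a.e. by Poincaré recurrence. For irrational `f`, `A_f` misses `f + A` up to a null set: if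
`y ∈ f + A` and `y + k·qf ∈ f' + A` with `f'` rational, then `y + k·qf` lies in the two tiles
of `f` and `f'` of the tiling by `(1 + kq)F`. Hence `U = ⋂ A_f` a.e. and
`0 < μ(A) ≤ μ(A_f) ≤ 1 - μ(A)`.
-/

open Finset Filter

variable {G ι : Type*} [AddCommGroup G]

def IsTiling [MeasurableSpace G] (μ : Measure G) (F : Finset ι) (τ : ι → G) (A : Set G) : Prop :=
  ∀ᵐ x ∂μ, ∃! i, i ∈ F ∧ x - τ i ∈ A

open Classical in
theorem isTiling_iff_card [MeasurableSpace G] {μ : Measure G} {F : Finset ι} {τ : ι → G}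
    {A : Set G} : IsTiling μ F τ A ↔ ∀ᵐ x ∂μ, #{i ∈ F | x - τ i ∈ A} = 1 := by
  simp only [IsTiling, card_eq_one_iff_existsUnique, mem_filter]

def tileUnion (F : Finset ι) (τ : ι → G) (A : Set G) (P : ι → Prop) : Set G :=
  {y | ∃ i ∈ F, P i ∧ y - τ i ∈ A}

def recurrentSet (U : Set G) (g : G) : Set G := {y | ∃ᶠ k : ℕ in atTop, y + k • g ∈ U}

theorem setOf_sub_mem_recurrentSet (U : Set G) (g : G) :
    {y | y - g ∈ recurrentSet U g} = recurrentSet U g := by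
  ext y
  change (∃ᶠ k : ℕ in atTop, y - g + k • g ∈ U) ↔ ∃ᶠ k : ℕ in atTop, y + k • g ∈ U
  conv_lhs => rw [← map_add_atTop_eq_nat 1, frequently_map]
  simp only [succ_nsmul, sub_add_add_cancel]

namespace AddMonoidAlgebra

variable {R : Type*} [Semiring R]

noncomputable def convIndicator (A : Set G) (x : G) : AddMonoidAlgebra R G →+ R :=
  (Finsupp.liftAddHom fun γ => AddMonoidHom.mulRight (A.indicator 1 (x - γ))).comp
    coeffAddEquiv.toAddMonoidHom

theorem convIndicator_single (A : Set G) (x γ : G) (b : R) :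
    convIndicator A x (single γ b) = b * A.indicator 1 (x - γ) :=
  Finsupp.liftAddHom_apply_single _ _ _

theorem convIndicator_mul_single_one (A : Set G) (x γ : G) (ψ : AddMonoidAlgebra R G) :
    convIndicator A x (ψ * single γ 1) = convIndicator A (x - γ) ψ := by
  induction ψ using AddMonoidAlgebra.induction_linear with
  | zero => simp
  | add ψ ψ' h h' => rw [add_mul, map_add, map_add, h, h']
  | single a b =>
    rw [single_mul_single, mul_one, convIndicator_single, convIndicator_single, sub_sub, add_comm]

open Classical in
theorem convIndicator_sum_single (A : Set G) (x : G) (F : Finset ι) (τ : ι → G) :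
    convIndicator A x (∑ i ∈ F, single (τ i) (1 : R)) = #{i ∈ F | x - τ i ∈ A} := by
  simp only [map_sum, convIndicator_single, one_mul, Set.indicator_apply, Pi.one_apply]
  rw [sum_boole]

theorem sum_single_pow_char (p : ℕ) [Fact p.Prime] (F : Finset ι) (τ : ι → G) :
    (∑ i ∈ F, single (τ i) (1 : ZMod p)) ^ p = ∑ i ∈ F, single (p • τ i) 1 := by
  have := charP_of_injective_algebraMap' (ZMod p) (A := AddMonoidAlgebra (ZMod p) G) p
  simp only [sum_pow_char, single_pow, one_pow]

end AddMonoidAlgebra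

open AddMonoidAlgebra

section Invariant

variable [MeasurableSpace G] [MeasurableAdd G] {μ : Measure G} [μ.IsAddRightInvariant]
  {F : Finset ι} {τ : ι → G} {A : Set G}

theorem convIndicator_pow_of_isTiling {R : Type*} [Semiring R] (h : IsTiling μ F τ A) (n : ℕ) :
    ∀ᵐ x ∂μ, convIndicator A x ((∑ i ∈ F, single (τ i) (1 : R)) ^ (n + 1)) = (#F : R) ^ n := by
  induction n with
  | zero =>
    filter_upwards [isTiling_iff_card.mp h] with x hx
    rw [zero_add, pow_one, pow_zero, convIndicator_sum_single, hx, Nat.cast_one]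
  | succ n ih =>
    have hshift : ∀ᵐ x ∂μ, ∀ i ∈ F, convIndicator A (x - τ i)
        ((∑ i ∈ F, single (τ i) (1 : R)) ^ (n + 1)) = (#F : R) ^ n :=
      (ae_ball_iff F.countable_toSet).mpr fun i _ =>
        (measurePreserving_sub_right μ (τ i)).quasiMeasurePreserving.ae ih
    filter_upwards [hshift] with x hx
    rw [pow_succ _ (n + 1), mul_sum, map_sum, sum_congr rfl fun i hi =>
      (convIndicator_mul_single_one A x (τ i) _).trans (hx i hi), sum_const, nsmul_eq_mul,
      pow_succ']

open Classical in
theorem IsTiling.nsmul_of_prime (h : IsTiling μ F τ A) {p : ℕ} (hp : p.Prime) (hF : #F < p) :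
    IsTiling μ F (p • τ) A := by
  rcases F.eq_empty_or_nonempty with rfl | hne
  · simpa [IsTiling] using h
  have := Fact.mk hp
  have hF0 : (#F : ZMod p) ≠ 0 := by
    rw [Ne, ZMod.natCast_eq_zero_iff]
    exact fun hdvd => hF.not_ge (Nat.le_of_dvd hne.card_pos hdvd)
  rw [isTiling_iff_card]
  filter_upwards [convIndicator_pow_of_isTiling (R := ZMod p) h (p - 1)] with x hx
  rwa [Nat.sub_add_cancel hp.one_le, sum_single_pow_char, convIndicator_sum_single,
    ZMod.pow_card_sub_one_eq_one hF0, ← Nat.cast_one, ZMod.natCast_eq_natCast_iff',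
    Nat.mod_eq_of_lt ((card_filter_le _ _).trans_lt hF), Nat.mod_eq_of_lt hp.one_lt] at hx

theorem IsTiling.nsmul (h : IsTiling μ F τ A) {r : ℕ} (hr : 0 < r)
    (hrF : r.Coprime (#F).factorial) : IsTiling μ F (r • τ) A := by
  induction r using Nat.recOnMul generalizing τ with
  | zero => exact (lt_irrefl 0 hr).elim
  | one => rwa [one_smul]
  | prime p hp =>
    exact h.nsmul_of_prime hp
      (not_le.mp <| hp.dvd_factorial.not.mp <| hp.coprime_iff_not_dvd.mp hrF)
  | mul a b iha ihb =>
    rw [Nat.coprime_mul_iff_left] at hrF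
    rw [mul_comm, mul_smul]
    exact ihb (iha h (Nat.pos_of_mul_pos_right hr) hrF.1) (Nat.pos_of_mul_pos_left hr) hrF.2

theorem IsTiling.measure_pos [NeZero μ] (h : IsTiling μ F τ A) : 0 < μ A := by
  refine pos_iff_ne_zero.mpr fun hA => ?_
  have hout : ∀ᵐ x ∂μ, ∀ i ∈ F, x - τ i ∉ A :=
    (ae_ball_iff F.countable_toSet).mpr fun i _ =>
      (measurePreserving_sub_right μ (τ i)).quasiMeasurePreserving.ae
        (measure_eq_zero_iff_ae_notMem.mp hA)
  obtain ⟨x, ⟨i, ⟨hi, hxi⟩, -⟩, hx⟩ := (h.and hout).exists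
  exact hx i hi hxi

theorem measurableSet_recurrentSet {U : Set G} (hU : MeasurableSet U) (g : G) :
    MeasurableSet (recurrentSet U g) := by
  have : recurrentSet U g = limsup (fun k : ℕ => (· + k • g) ⁻¹' U) atTop := by
    ext y
    simp only [recurrentSet, mem_limsup_iff_frequently_mem, Set.mem_preimage, Set.mem_ofPred_eq]
  exact this ▸ MeasurableSet.measurableSet_limsup fun k => measurable_add_const _ hU

theorem ae_mem_recurrentSet [IsFiniteMeasure μ] {U : Set G} (hU : MeasurableSet U) (g : G) :
    ∀ᵐ y ∂μ, y ∈ U → y ∈ recurrentSet U g := by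
  filter_upwards [(measurePreserving_add_right μ g).conservative.ae_mem_imp_frequently_image_mem
    hU.nullMeasurableSet] with y hy hyU
  simpa only [recurrentSet, Set.mem_ofPred_eq, add_right_iterate_apply] using hy hyU

theorem measure_le_measure_recurrentSet [IsFiniteMeasure μ] {U : Set G} (hU : MeasurableSet U)
    (g : G) : μ U ≤ μ (recurrentSet U g) :=
  measure_mono_ae (ae_mem_recurrentSet hU g)

variable {P : ι → Prop}

theorem measurableSet_tileUnion (hA : MeasurableSet A) : MeasurableSet (tileUnion F τ A P) := by
  have : tileUnion F τ A P = ⋃ i ∈ {i | i ∈ F ∧ P i}, (· - τ i) ⁻¹' A := by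
    ext y
    simp [tileUnion, and_assoc]
  exact this ▸ .biUnion (F.countable_toSet.mono fun _ => And.left)
    fun i _ => by simpa only [sub_eq_add_neg] using measurable_add_const (-τ i) hA

theorem ae_notMem_tile_of_mem_recurrentSet {q : ℕ} (hrat : ∀ i ∈ F, P i → q • τ i = 0)
    (hdil : ∀ k : ℕ, IsTiling μ F ((1 + k * q) • τ) A) {j : ι} (hj : j ∈ F) (hPj : ¬ P j) :
    ∀ᵐ y ∂μ, y ∈ recurrentSet (tileUnion F τ A P) (q • τ j) → y - τ j ∉ A := by
  have hshift : ∀ᵐ y ∂μ, ∀ k : ℕ, ∃! i, i ∈ F ∧ y + k • q • τ j - (1 + k * q) • τ i ∈ A :=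
    ae_all_iff.mpr fun k =>
      (measurePreserving_add_right μ (k • q • τ j)).quasiMeasurePreserving.ae (hdil k)
  filter_upwards [hshift] with y hy hrec hyj
  obtain ⟨k, i, hi, hPi, hyi⟩ := hrec.exists
  have hij : i ≠ j := fun h => hPj (h ▸ hPi)
  obtain ⟨_, _, huniq⟩ := hy k
  refine hij ((huniq i ⟨hi, ?_⟩).trans (huniq j ⟨hj, ?_⟩).symm)
  · rwa [add_smul, one_smul, mul_smul, hrat i hi hPi, smul_zero, add_zero]
  · rwa [add_smul, one_smul, mul_smul, add_sub_add_right_eq_sub]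

theorem measure_recurrentSet_lt_one [IsProbabilityMeasure μ] (hA : MeasurableSet A) {q : ℕ}
    (hrat : ∀ i ∈ F, P i → q • τ i = 0) (hdil : ∀ k : ℕ, IsTiling μ F ((1 + k * q) • τ) A)
    {j : ι} (hj : j ∈ F) (hPj : ¬ P j) :
    μ (recurrentSet (tileUnion F τ A P) (q • τ j)) < 1 := by
  have hApos : 0 < μ A := by simpa using (hdil 0).measure_pos
  have hsub : recurrentSet (tileUnion F τ A P) (q • τ j) ≤ᵐ[μ] ((· - τ j) ⁻¹' A)ᶜ :=
    ae_notMem_tile_of_mem_recurrentSet hrat hdil hj hPj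
  calc μ (recurrentSet (tileUnion F τ A P) (q • τ j))
      ≤ μ ((· - τ j) ⁻¹' A)ᶜ := measure_mono_ae hsub
    _ = 1 - μ A := by
      rw [prob_compl_eq_one_sub ((measurePreserving_sub_right μ (τ j)).measurable hA),
        (measurePreserving_sub_right μ (τ j)).measure_preimage hA.nullMeasurableSet]
    _ < 1 := ENNReal.sub_lt_self ENNReal.one_ne_top one_ne_zero hApos.ne'

theorem tileUnion_ae_eq_setOf_forall_mem_recurrentSet [IsFiniteMeasure μ]
    (hA : MeasurableSet A) {q : ℕ} (hrat : ∀ i ∈ F, P i → q • τ i = 0)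
    (hdil : ∀ k : ℕ, IsTiling μ F ((1 + k * q) • τ) A) :
    tileUnion F τ A P =ᵐ[μ]
      {y | ∀ j ∈ F, ¬ P j → y ∈ recurrentSet (tileUnion F τ A P) (q • τ j)} := by
  have h : IsTiling μ F τ A := by simpa using hdil 0
  have hrec : ∀ᵐ y ∂μ, ∀ j ∈ F, y ∈ tileUnion F τ A P →
      y ∈ recurrentSet (tileUnion F τ A P) (q • τ j) :=
    (ae_ball_iff F.countable_toSet).mpr fun j _ => ae_mem_recurrentSet (measurableSet_tileUnion hA) _
  have hdisj : ∀ᵐ y ∂μ, ∀ j ∈ {j | j ∈ F ∧ ¬ P j},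
      y ∈ recurrentSet (tileUnion F τ A P) (q • τ j) → y - τ j ∉ A :=
    (ae_ball_iff (F.countable_toSet.mono fun _ => And.left)).mpr fun _ ⟨hj, hPj⟩ =>
      ae_notMem_tile_of_mem_recurrentSet hrat hdil hj hPj
  filter_upwards [h, hrec, hdisj] with y ⟨i, ⟨hi, hyi⟩, _⟩ hrec hdisj
  refine propext ⟨fun hy j hj _ => hrec j hj hy, fun hy => ⟨i, hi, ?_, hyi⟩⟩
  by_contra hPi
  exact hdisj i ⟨hi, hPi⟩ (hy i hi hPi) hyi

end Invariant

instance : IsProbabilityMeasure (volume : Measure (AddCircle (1 : ℝ))) :=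
  ⟨by simp [AddCircle.measure_univ]⟩

section Torus

variable {d : ℕ}

theorem toTorus_zero : toTorus (0 : Fin d → ℝ) = 0 :=
  funext fun _ => AddCircle.coe_zero _

theorem toTorus_natCast_smul (n : ℕ) (v : Fin d → ℝ) : toTorus ((n : ℝ) • v) = n • toTorus v := by
  funext i
  change ((((n : ℝ) • v) i : ℝ) : AddCircle (1 : ℝ)) = n • (v i : AddCircle (1 : ℝ))
  rw [Pi.smul_apply, smul_eq_mul, ← nsmul_eq_mul, AddCircle.coe_nsmul]

theorem isRationalVec_zero : IsRationalVec (0 : Fin d → ℝ) := fun _ => ⟨0, by simp⟩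

theorem IsRationalVec.isOfFinAddOrder_toTorus {f : Fin d → ℝ} (hf : IsRationalVec f) :
    IsOfFinAddOrder (toTorus f) :=
  IsOfFinAddOrder.pi fun j => AddCircle.isOfFinAddOrder_iff_exists_rat_eq_div.mpr <| by
    obtain ⟨r, hr⟩ := hf j
    exact ⟨r, by rw [hr, div_one]⟩

theorem exists_factorial_dvd_nsmul_toTorus_eq_zero (F : Finset (Fin d → ℝ)) :
    ∃ q : ℕ, 0 < q ∧ (#F).factorial ∣ q ∧ ∀ f ∈ F, IsRationalVec f → q • toTorus f = 0 := by
  classical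
  refine ⟨(#F).factorial * ∏ f ∈ F with IsRationalVec f, addOrderOf (toTorus f),
    Nat.mul_pos (Nat.factorial_pos _) (prod_pos fun f hf =>
      (mem_filter.mp hf).2.isOfFinAddOrder_toTorus.addOrderOf_pos), dvd_mul_right _ _,
    fun f hf hrat => ?_⟩
  rw [← addOrderOf_dvd_iff_nsmul_eq_zero]
  exact (dvd_prod_of_mem _ (mem_filter.mpr ⟨hf, hrat⟩)).mul_left _

end Torus

theorem torus_tiling_weak_structure_general {d : ℕ}
    (F : Finset (Fin d → ℝ)) (h0 : (0 : Fin d → ℝ) ∈ F)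
    (A : Set (Torus d)) (hA : MeasurableSet A)
    (htile : ∀ᵐ x ∂(volume : Measure (Torus d)), ∃! f, f ∈ F ∧ x - toTorus f ∈ A) :
    ∃ q : ℕ, 0 < q ∧ ∃ Af : (Fin d → ℝ) → Set (Torus d),
      (∀ f ∈ F, ¬ IsRationalVec f →
        MeasurableSet (Af f) ∧
        {y : Torus d | y - toTorus ((q : ℝ) • f) ∈ Af f}
          =ᵐ[(volume : Measure (Torus d))] Af f ∧
        0 < volume (Af f) ∧ volume (Af f) < 1) ∧
      {y : Torus d | ∃ f ∈ F, IsRationalVec f ∧ y - toTorus f ∈ A}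
        =ᵐ[(volume : Measure (Torus d))]
      {y : Torus d | ∀ f ∈ F, ¬ IsRationalVec f → y ∈ Af f} := by
  obtain ⟨q, hq, hqF, hrat⟩ := exists_factorial_dvd_nsmul_toTorus_eq_zero F
  have hdil : ∀ k : ℕ, IsTiling volume F ((1 + k * q) • toTorus) A := fun k =>
    IsTiling.nsmul htile (by omega) <|
      ((Nat.coprime_add_mul_right_left 1 q k).mpr (Nat.coprime_one_left q)).coprime_dvd_right hqF
  have hU := measurableSet_tileUnion (F := F) (τ := toTorus) (P := IsRationalVec) hA
  refine ⟨q, hq, fun f => recurrentSet (tileUnion F toTorus A IsRationalVec) (q • toTorus f),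
    fun f hf hirr => ⟨measurableSet_recurrentSet hU _, ?_, ?_,
      measure_recurrentSet_lt_one hA hrat hdil hf hirr⟩,
    tileUnion_ae_eq_setOf_forall_mem_recurrentSet hA hrat hdil⟩
  · rw [toTorus_natCast_smul, setOf_sub_mem_recurrentSet]
    exact EventuallyEq.rfl
  · calc 0 < volume A := IsTiling.measure_pos htile
      _ ≤ volume (tileUnion F toTorus A IsRationalVec) := measure_mono fun y hy =>
        ⟨0, h0, isRationalVec_zero, by rwa [toTorus_zero, sub_zero]⟩
      _ ≤ _ := measure_le_measure_recurrentSet hU _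

/-- **Weak structure.**  Let `F ⊕ A =_ae 𝕋^d` be a measurable tiling of the `d`-torus by a
finite set `F ⊂ ℝ^d` with `0 ∈ F` and a measurable set `A`.  Then there is a natural number
`q > 0` such that, up to null sets,
`⋃_{f ∈ F ∩ ℚ^d} (f + A) = ⋂_{f ∈ F \ ℚ^d} A_f`, where each `A_f` is a measurable set,
invariant under translation by `q • f` up to null sets, with `0 < μ(A_f) < 1`. -/
theorem torus_tiling_weak_structure {d : ℕ} (hd : 1 ≤ d)
    (F : Finset (Fin d → ℝ)) (h0 : (0 : Fin d → ℝ) ∈ F)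
    (A : Set (Torus d)) (hA : MeasurableSet A)
    (htile : ∀ᵐ x ∂(volume : Measure (Torus d)), ∃! f, f ∈ F ∧ x - toTorus f ∈ A) :
    ∃ q : ℕ, 0 < q ∧ ∃ Af : (Fin d → ℝ) → Set (Torus d),
      (∀ f ∈ F, ¬ IsRationalVec f →
        MeasurableSet (Af f) ∧
        {y : Torus d | y - toTorus ((q : ℝ) • f) ∈ Af f}
          =ᵐ[(volume : Measure (Torus d))] Af f ∧
        0 < volume (Af f) ∧ volume (Af f) < 1) ∧
      {y : Torus d | ∃ f ∈ F, IsRationalVec f ∧ y - toTorus f ∈ A}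
        =ᵐ[(volume : Measure (Torus d))]
      {y : Torus d | ∀ f ∈ F, ¬ IsRationalVec f → y ∈ Af f} :=
  torus_tiling_weak_structure_general F h0 A hA htile
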